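/- arXiv:1704.01023 — 2 statements merged into one kernel-verified Lean document; each statement's English description precedes it below -/
import Mathlib

section
/- Let G and G̃ be the CFI graphs built from K_4 as global graph, where G̃ is obtained from G by flipping the connection along one edge of K_4 (replacing the 8 edges between two gadgets by the 8 edges matching the opposite halves). Then G̃ contains no copy of K_4 as a subgraph, while G contains 8 copies; hence G and G̃ are not isomorphic. -/
/-- The half (as a `Bool`) to which index `j ∈ {0,1,2,3}` belongs under partition
label `0 = a = {{0,1},{2,3}}`, `1 = b = {{0,3},{1,2}}`, `2 = c = {{0,2},{1,3}}`. -/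
def bhalf : Fin 3 → Fin 4 → Bool
  | 0, j => decide (2 ≤ j.val)
  | 1, j => decide (j = 1 ∨ j = 2)
  | 2, j => decide (j.val % 2 = 1)

/-- The partition label carried by the directed edge `(i, i')` of `K₄` on `ZMod 4`:
`(i, i+1)` carries `a`, `(i+1, i)` carries `c`, and the diagonals carry `b`. -/
def lab4 (i i' : ZMod 4) : Fin 3 :=
  if i' = i + 1 then 0 else if i' = i + 3 then 2 else 1

/-- The flipped edge is the diagonal `{1, 3}` of `K₄`. -/
def flipEdge (i i' : ZMod 4) : Prop := (i = 1 ∧ i' = 3) ∨ (i = 3 ∧ i' = 1)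

instance (i i' : ZMod 4) : Decidable (flipEdge i i') := by
  unfold flipEdge; infer_instance

/-- The CFI graph over the global graph `K₄`: each vertex `i` of `K₄` is replaced by the
gadget `{i} × Fin 4`, and gadget vertices `(i,j)` and `(i',j')` for `i ≠ i'` are joined
precisely when `j` and `j'` lie in matching halves of the partitions labelling the
directed edges `(i,i')` and `(i',i)` — with the matching reversed on the flipped edge
when `flip = true`. -/
def cfiK4 (flip : Bool) : SimpleGraph (ZMod 4 × Fin 4) :=
  SimpleGraph.fromRel (fun p q => p.1 ≠ q.1 ∧
    ((bhalf (lab4 p.1 q.1) p.2 = bhalf (lab4 q.1 p.1) q.2) ↔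
      ¬(flip = true ∧ flipEdge p.1 q.1)))

instance (b : Bool) : DecidableRel (cfiK4 b).Adj := fun p q =>
  decidable_of_iff _ (SimpleGraph.fromRel_adj _ p q).symm

lemma cliqueSet_eq (b : Bool) :
    {t : Finset (ZMod 4 × Fin 4) | (cfiK4 b).IsNClique 4 t} =
      ↑((Finset.univ.powersetCard 4).filter (fun t => (cfiK4 b).IsNClique 4 t)) := by
  ext t
  simp only [Set.mem_setOf_eq, Finset.coe_filter, Finset.mem_powersetCard,
    Finset.subset_univ, true_and]
  exact ⟨fun h => ⟨h.card_eq, h⟩, fun h => h.2⟩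

set_option maxRecDepth 100000 in
set_option maxHeartbeats 8000000 in
lemma count_true :
    ((Finset.univ.powersetCard 4).filter (fun t => (cfiK4 true).IsNClique 4 t)).card = 0 := by
  decide

set_option maxRecDepth 100000 in
set_option maxHeartbeats 8000000 in
lemma count_false :
    ((Finset.univ.powersetCard 4).filter (fun t => (cfiK4 false).IsNClique 4 t)).card = 8 := by
  decide

/-- The twisted CFI graph over `K₄` contains no copy of `K₄`, while the untwisted one
contains 8 copies; hence the two graphs are not isomorphic. -/
theorem cfiK4_twisted_not_isomorphic :
    Set.ncard {t : Finset (ZMod 4 × Fin 4) | (cfiK4 true).IsNClique 4 t} = 0 ∧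
    Set.ncard {t : Finset (ZMod 4 × Fin 4) | (cfiK4 false).IsNClique 4 t} = 8 ∧
    IsEmpty (cfiK4 false ≃g cfiK4 true) := by
  have h0 : Set.ncard {t : Finset (ZMod 4 × Fin 4) | (cfiK4 true).IsNClique 4 t} = 0 := by
    rw [cliqueSet_eq, Set.ncard_coe_finset, count_true]
  have h8 : Set.ncard {t : Finset (ZMod 4 × Fin 4) | (cfiK4 false).IsNClique 4 t} = 8 := by
    rw [cliqueSet_eq, Set.ncard_coe_finset, count_false]
  refine ⟨h0, h8, ⟨fun φ => ?_⟩⟩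
  have hne : {t : Finset (ZMod 4 × Fin 4) | (cfiK4 false).IsNClique 4 t}.Nonempty := by
    rw [← Set.ncard_pos (Set.toFinite _)]
    omega
  obtain ⟨t, ht⟩ := hne
  have hmap : (cfiK4 true).IsNClique 4 (t.map φ.toEmbedding.toEmbedding) := by
    constructor
    · intro a ha b hb hab
      simp only [Finset.coe_map, Set.mem_image, Finset.mem_coe] at ha hb
      obtain ⟨x, hx, rfl⟩ := ha
      obtain ⟨y, hy, rfl⟩ := hb
      have hxy : x ≠ y := fun h => hab (by rw [h])
      exact φ.toEmbedding.map_adj_iff.mpr (ht.1 hx hy hxy)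
    · rw [Finset.card_map]; exact ht.2
  have : t.map φ.toEmbedding.toEmbedding ∈
      {t : Finset (ZMod 4 × Fin 4) | (cfiK4 true).IsNClique 4 t} := hmap
  have hempty : {t : Finset (ZMod 4 × Fin 4) | (cfiK4 true).IsNClique 4 t} = ∅ :=
    (Set.ncard_eq_zero (Set.toFinite _)).mp h0
  rw [hempty] at this
  exact this
end

section
/- In the CFI construction over a connected 3-regular graph H, applying a 'Bottom-Top exchange' (swapping v_0 ↔ v_1's pair {v_0,v_1} with {v_2,v_3}) at a gadget corresponding to a vertex v of H yields a graph isomorphic to the one in which the flip is moved from one edge incident to v to another edge incident to v. Consequently, for the CFI graphs over K_4, flipping any single edge of K_4 yields graphs that are all isomorphic to each other. -/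
/-- The CFI graph over a global graph `H` with a labeling `lab` of the directed edges by
the three partitions, and a set `F` of flipped edges: each vertex `u` of `H` becomes the
gadget `{u} × Fin 4`, and `(u,j)` is joined to `(v,j')` for `H.Adj u v` precisely when
`j` and `j'` lie in matching halves of the partitions labelling `(u,v)` and `(v,u)` —
with the matching reversed on edges of `F`. -/
def cfi {VH : Type*} (H : SimpleGraph VH) (lab : VH → VH → Fin 3) (F : Set (Sym2 VH)) :
    SimpleGraph (VH × Fin 4) :=
  SimpleGraph.fromRel (fun p q => H.Adj p.1 q.1 ∧
    ((bhalf (lab p.1 q.1) p.2 = bhalf (lab q.1 p.1) q.2) ↔ s(p.1, q.1) ∉ F))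

/-- A proper CFI labeling: at every vertex, distinct outgoing edges get distinct labels. -/
def ProperLab {VH : Type*} (H : SimpleGraph VH) (lab : VH → VH → Fin 3) : Prop :=
  ∀ u v w, H.Adj u v → H.Adj u w → v ≠ w → lab u v ≠ lab u w

/-- The Bottom-Top exchange permutation on a gadget that preserves the halves of
partition label `m` and flips the halves of the two other labels. -/
def sigBT : Fin 3 → Fin 4 → Fin 4
  | 0, j => ![1, 0, 3, 2] j
  | 1, j => ![3, 2, 1, 0] j
  | 2, j => ![2, 3, 0, 1] j

lemma sigBT_invol : ∀ (m : Fin 3) (j : Fin 4), sigBT m (sigBT m j) = j := by decide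

lemma bhalf_sigBT_self : ∀ (m : Fin 3) (j : Fin 4), bhalf m (sigBT m j) = bhalf m j := by decide

lemma bhalf_sigBT_ne : ∀ (l m : Fin 3) (j : Fin 4), l ≠ m → bhalf l (sigBT m j) = !(bhalf l j) := by
  decide

/-- The third element of `Fin 3` distinct from two given (distinct) ones. -/
def other3 (a b : Fin 3) : Fin 3 :=
  if 0 ≠ a ∧ 0 ≠ b then 0 else if 1 ≠ a ∧ 1 ≠ b then 1 else 2

lemma other3_spec : ∀ a b : Fin 3, a ≠ b →
    other3 a b ≠ a ∧ other3 a b ≠ b ∧ ∀ c, c ≠ a → c ≠ b → c = other3 a b := by decide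

lemma bool_flip_left : ∀ b1 b2 : Bool, ((!b1) = b2 ↔ ¬(b1 = b2)) := by decide

lemma bool_flip_right : ∀ b1 b2 : Bool, (b1 = !b2 ↔ ¬(b1 = b2)) := by decide

lemma sym2_ne_left {α : Type*} {v x y : α} (hxy : x ≠ y) (hvy : v ≠ y) :
    s(v, x) ≠ s(v, y) := by
  intro h
  rcases Sym2.eq_iff.mp h with ⟨-, h'⟩ | ⟨h', -⟩
  · exact hxy h'
  · exact hvy h'

/-- Moving a flip between two edges incident to the common vertex `v`, via a Bottom-Top
exchange at the gadget of `v`. -/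
theorem cfi_move_flip {VH : Type} [DecidableEq VH] (H : SimpleGraph VH)
    (lab : VH → VH → Fin 3) (hp : ProperLab H lab) (v w1 w2 : VH)
    (h1 : H.Adj v w1) (h2 : H.Adj v w2) (hw : w1 ≠ w2) :
    Nonempty (cfi H lab {s(v, w1)} ≃g cfi H lab {s(v, w2)}) := by
  set m : Fin 3 := other3 (lab v w1) (lab v w2) with hmdef
  obtain ⟨hm1, hm2, hm3⟩ := other3_spec _ _ (hp v w1 w2 h1 h2 hw)
  let f : VH × Fin 4 → VH × Fin 4 := fun p => (p.1, if p.1 = v then sigBT m p.2 else p.2)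
  have hinv : Function.Involutive f := by
    rintro ⟨u, j⟩
    by_cases h : u = v <;> simp [f, h, sigBT_invol]
  have hvw1 : v ≠ w1 := h1.ne
  have hvw2 : v ≠ w2 := h2.ne
  have hne12 : s(v, w1) ≠ s(v, w2) := sym2_ne_left hw hvw2
  have key : ∀ (u u' : VH) (j k : Fin 4), H.Adj u u' →
      (((bhalf (lab u u') (if u = v then sigBT m j else j) =
          bhalf (lab u' u) (if u' = v then sigBT m k else k)) ↔
        s(u, u') ∉ ({s(v, w2)} : Set (Sym2 VH)))
      ↔ ((bhalf (lab u u') j = bhalf (lab u' u) k) ↔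
        s(u, u') ∉ ({s(v, w1)} : Set (Sym2 VH)))) := by
    intro u u' j k hadj
    by_cases hu : u = v <;> by_cases hu' : u' = v
    · rw [hu, hu'] at hadj; exact absurd hadj (H.irrefl)
    · rw [hu] at hadj ⊢
      rw [if_pos rfl, if_neg hu']
      by_cases hw1 : u' = w1
      · rw [hw1]
        rw [bhalf_sigBT_ne _ _ _ (Ne.symm hm1)]
        simp [hne12, bool_flip_left, bool_flip_right, bool_flip_left]
      · by_cases hw2 : u' = w2
        · rw [hw2, bhalf_sigBT_ne _ _ _ (Ne.symm hm2)]
          simp [hne12.symm, bool_flip_left, bool_flip_right, bool_flip_left]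
        · have hl : lab v u' = m :=
            hm3 _ (hp v u' w1 hadj h1 hw1) (hp v u' w2 hadj h2 hw2)
          rw [hl, bhalf_sigBT_self, ← hl]
          simp [sym2_ne_left hw1 hvw1, sym2_ne_left hw2 hvw2]
    · rw [hu'] at hadj ⊢
      rw [if_neg hu, if_pos rfl]
      rw [show s(u, v) = s(v, u) from Sym2.eq_swap]
      by_cases hw1 : u = w1
      · rw [hw1]
        rw [bhalf_sigBT_ne _ _ _ (Ne.symm hm1)]
        simp [hne12, bool_flip_right, bool_flip_left]
      · by_cases hw2 : u = w2
        · rw [hw2, bhalf_sigBT_ne _ _ _ (Ne.symm hm2)]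
          simp [hne12.symm, bool_flip_right, bool_flip_left]
        · have hl : lab v u = m :=
            hm3 _ (hp v u w1 hadj.symm h1 hw1) (hp v u w2 hadj.symm h2 hw2)
          rw [hl, bhalf_sigBT_self, ← hl]
          simp [sym2_ne_left hw1 hvw1, sym2_ne_left hw2 hvw2]
    · rw [if_neg hu, if_neg hu']
      have n : ∀ x : VH, s(u, u') ≠ s(v, x) := by
        intro x h
        rcases Sym2.eq_iff.mp h with ⟨h', -⟩ | ⟨-, h'⟩
        · exact hu h'
        · exact hu' h'
      simp [n w1, n w2]
  refine ⟨⟨hinv.toPerm f, ?_⟩⟩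
  rintro ⟨u, j⟩ ⟨u', k⟩
  simp only [cfi, SimpleGraph.fromRel_adj, Function.Involutive.coe_toPerm]
  constructor
  · rintro ⟨hne, h⟩
    refine ⟨fun h' => hne (by rw [h']), ?_⟩
    rcases h with h | h
    · exact Or.inl ⟨h.1, (key u u' j k h.1).mp h.2⟩
    · exact Or.inr ⟨h.1, (key u' u k j h.1).mp h.2⟩
  · rintro ⟨hne, h⟩
    refine ⟨fun h' => hne (hinv.injective h'), ?_⟩
    rcases h with h | h
    · exact Or.inl ⟨h.1, (key u u' j k h.1).mpr h.2⟩
    · exact Or.inr ⟨h.1, (key u' u k j h.1).mpr h.2⟩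

/-- Moving the flip between any two edges through a common vertex. -/
theorem cfi_move {VH : Type} [DecidableEq VH] (H : SimpleGraph VH)
    (lab : VH → VH → Fin 3) (hp : ProperLab H lab) (v : VH) (e1 e2 : Sym2 VH)
    (he1 : e1 ∈ H.edgeSet) (he2 : e2 ∈ H.edgeSet) (hv1 : v ∈ e1) (hv2 : v ∈ e2) :
    Nonempty (cfi H lab {e1} ≃g cfi H lab {e2}) := by
  obtain ⟨w1, rfl⟩ : ∃ w, e1 = s(v, w) := ⟨Sym2.Mem.other hv1, (Sym2.other_spec hv1).symm⟩
  obtain ⟨w2, rfl⟩ : ∃ w, e2 = s(v, w) := ⟨Sym2.Mem.other hv2, (Sym2.other_spec hv2).symm⟩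
  rw [SimpleGraph.mem_edgeSet] at he1 he2
  by_cases hw : w1 = w2
  · subst hw; exact ⟨RelIso.refl _⟩
  · exact cfi_move_flip H lab hp v w1 w2 he1 he2 hw

/-- In the CFI construction over a connected 3-regular graph, a flip can be moved between
two edges incident to a common vertex without changing the isomorphism type (this is the
effect of a Bottom-Top exchange at the common gadget).  Consequently, over `K₄` all
single-edge flips yield pairwise isomorphic graphs. -/
theorem cfi_flip_move :
    (∀ (VH : Type) [Fintype VH] [DecidableEq VH] (H : SimpleGraph VH)
        [DecidableRel H.Adj], H.Connected → H.IsRegularOfDegree 3 →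
      ∀ lab : VH → VH → Fin 3, ProperLab H lab →
      ∀ (v : VH) (e1 e2 : Sym2 VH), e1 ∈ H.edgeSet → e2 ∈ H.edgeSet →
        v ∈ e1 → v ∈ e2 →
        Nonempty (cfi H lab {e1} ≃g cfi H lab {e2})) ∧
    (∀ lab : Fin 4 → Fin 4 → Fin 3, ProperLab (⊤ : SimpleGraph (Fin 4)) lab →
      ∀ e1 e2 : Sym2 (Fin 4),
        e1 ∈ (⊤ : SimpleGraph (Fin 4)).edgeSet → e2 ∈ (⊤ : SimpleGraph (Fin 4)).edgeSet →
        Nonempty (cfi ⊤ lab {e1} ≃g cfi ⊤ lab {e2})) := by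
  constructor
  · intro VH _ _ H _ _ _ lab hp v e1 e2 he1 he2 hv1 hv2
    exact cfi_move H lab hp v e1 e2 he1 he2 hv1 hv2
  · intro lab hp e1 e2 he1 he2
    induction e1 using Sym2.ind with
    | _ a b =>
    induction e2 using Sym2.ind with
    | _ c d =>
    by_cases hac : a = c
    · exact cfi_move ⊤ lab hp a _ _ he1 he2 (by simp) (by simp [hac])
    · by_cases had : a = d
      · exact cfi_move ⊤ lab hp a _ _ he1 he2 (by simp) (by simp [had])
      · by_cases hbc : b = c
        · exact cfi_move ⊤ lab hp b _ _ he1 he2 (by simp) (by simp [hbc])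
        · by_cases hbd : b = d
          · exact cfi_move ⊤ lab hp b _ _ he1 he2 (by simp) (by simp [hbd])
          · have e3mem : s(a, c) ∈ (⊤ : SimpleGraph (Fin 4)).edgeSet := by
              simpa using hac
            obtain ⟨i1⟩ := cfi_move ⊤ lab hp a s(a, b) s(a, c) he1 e3mem (by simp) (by simp)
            obtain ⟨i2⟩ := cfi_move ⊤ lab hp c s(a, c) s(c, d) e3mem he2 (by simp) (by simp)
            exact ⟨i1.trans i2⟩
end
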